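/- (Chain rule for cyclic derivatives, free algebra version) Let F = k⟨x₁,…,xₙ⟩ and let H : F → F be a k-algebra endomorphism with H(xⱼ) = hⱼ. Writing the double derivation ∂hⱼ/∂xᵢ ∈ F ⊗ F in Sweedler notation as (∂hⱼ/∂xᵢ)' ⊗ (∂hⱼ/∂xᵢ)'', then for every φ ∈ F and every i: D_{x_i}(H(φ)) = Σⱼ (∂hⱼ/∂xᵢ)'' · H(D_{x_j}(φ)) · (∂hⱼ/∂xᵢ)'. -/

import Mathlib

/-!
The chain rule already holds one level up, for double derivations:
`∂(H ψ)/∂xᵢ = Σⱼ (∂hⱼ/∂xᵢ) ∘ H(∂ψ/∂xⱼ)`, where `(a ⊗ b) ∘ t = a t' ⊗ t'' b` is the outer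
bimodule action of `A ⊗ A` on itself. Both sides are double derivations along `H` that agree on
the generators, hence agree on the free algebra. Applying `μ ∘ τ` turns `(a ⊗ b) ∘ t` into
`t'' b a t'`, the sandwich of `μ τ (a ⊗ b)` by `t`, which gives the cyclic version.
-/

open TensorProduct

noncomputable section

/-- For `m : A`, the map `A ⊗ A → A`, `t' ⊗ t'' ↦ t'' * m * t'`, used to express
Sweedler-style sandwich sums `Σ t'' · m · t'`. -/
def sandwich {k A : Type*} [CommRing k] [Ring A] [Algebra k A] (m : A) :
    A ⊗[k] A →ₗ[k] A :=
  TensorProduct.lift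
    (LinearMap.mk₂ k (fun a b => b * m * a)
      (fun a a' b => by noncomm_ring)
      (fun c a b => by rw [mul_smul_comm])
      (fun a b b' => by noncomm_ring)
      (fun c a b => by rw [smul_mul_assoc, smul_mul_assoc]))

section DoubleDerivation

variable {k A B : Type*} [CommRing k] [Ring A] [Algebra k A] [Ring B] [Algebra k B]

/-- The Leibniz rule for the outer bimodule structure `a · x · b = (a ⊗ 1) x (1 ⊗ b)`. -/
def IsDoubleDerivation (D : A →ₗ[k] A ⊗[k] A) : Prop :=
  ∀ a b, D (a * b) = D a * (1 ⊗ₜ b) + (a ⊗ₜ 1) * D b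

theorem map_id_mulRight_eq_mul_one_tmul (b : A) (x : A ⊗[k] A) :
    TensorProduct.map LinearMap.id (LinearMap.mulRight k b) x = x * (1 ⊗ₜ b) := by
  induction x using TensorProduct.induction_on with
  | zero => simp
  | tmul p q => simp [Algebra.TensorProduct.tmul_mul_tmul]
  | add x y hx hy => simp [hx, hy, add_mul]

theorem map_mulLeft_id_eq_tmul_one_mul (a : A) (x : A ⊗[k] A) :
    TensorProduct.map (LinearMap.mulLeft k a) LinearMap.id x = (a ⊗ₜ 1) * x := by
  induction x using TensorProduct.induction_on with
  | zero => simp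
  | tmul p q => simp [Algebra.TensorProduct.tmul_mul_tmul]
  | add x y hx hy => simp [hx, hy, mul_add]

theorem IsDoubleDerivation.map_one_eq_zero {D : A →ₗ[k] A ⊗[k] A} (hD : IsDoubleDerivation D) :
    D 1 = 0 := by
  have h := hD 1 1
  rw [mul_one, ← Algebra.TensorProduct.one_def, mul_one, one_mul] at h
  exact left_eq_add.mp h

theorem IsDoubleDerivation.map_algebraMap {D : A →ₗ[k] A ⊗[k] A} (hD : IsDoubleDerivation D)
    (r : k) : D (algebraMap k A r) = 0 := by
  rw [Algebra.algebraMap_eq_smul_one, map_smul, hD.map_one_eq_zero, smul_zero]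

def outerMul (t : A ⊗[k] A) : A ⊗[k] A →ₗ[k] A ⊗[k] A :=
  TensorProduct.lift
    (LinearMap.mk₂ k (fun a b => (a ⊗ₜ 1) * t * (1 ⊗ₜ b))
      (fun a a' b => by rw [add_tmul, add_mul, add_mul])
      (fun c a b => by rw [← smul_tmul', smul_mul_assoc, smul_mul_assoc])
      (fun a b b' => by rw [tmul_add, mul_add])
      (fun c a b => by rw [tmul_smul, mul_smul_comm]))

@[simp]
theorem outerMul_tmul (t : A ⊗[k] A) (a b : A) :
    outerMul t (a ⊗ₜ b) = (a ⊗ₜ 1) * t * (1 ⊗ₜ b) :=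
  rfl

theorem outerMul_one (t : A ⊗[k] A) : outerMul t 1 = t := by
  rw [Algebra.TensorProduct.one_def, outerMul_tmul, ← Algebra.TensorProduct.one_def,
    one_mul, mul_one]

theorem outerMul_mul_one_tmul (t s : A ⊗[k] A) (b : A) :
    outerMul t (s * (1 ⊗ₜ b)) = outerMul t s * (1 ⊗ₜ b) := by
  induction s using TensorProduct.induction_on with
  | zero => simp
  | tmul p q => simp [Algebra.TensorProduct.tmul_mul_tmul, mul_assoc]
  | add x y hx hy => simp [add_mul, hx, hy]

theorem outerMul_tmul_one_mul (t s : A ⊗[k] A) (a : A) :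
    outerMul t ((a ⊗ₜ 1) * s) = (a ⊗ₜ 1) * outerMul t s := by
  induction s using TensorProduct.induction_on with
  | zero => simp
  | tmul p q =>
    rw [Algebra.TensorProduct.tmul_mul_tmul, one_mul, outerMul_tmul, outerMul_tmul, ← mul_assoc,
      ← mul_assoc, Algebra.TensorProduct.tmul_mul_tmul, mul_one]
  | add x y hx hy => simp [mul_add, hx, hy]

theorem sandwich_add (m m' : A) (t : A ⊗[k] A) :
    sandwich (m + m') t = sandwich m t + sandwich m' t := by
  induction t using TensorProduct.induction_on with
  | zero => simp
  | tmul p q => simp [sandwich, mul_add, add_mul]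
  | add x y hx hy => rw [map_add, map_add, map_add, hx, hy]; abel

theorem mul'_comm_outerMul (t s : A ⊗[k] A) :
    LinearMap.mul' k A (TensorProduct.comm k A A (outerMul t s)) =
      sandwich (LinearMap.mul' k A (TensorProduct.comm k A A s)) t := by
  induction s using TensorProduct.induction_on with
  | zero =>
    have h := sandwich_add (0 : A) 0 t
    rw [add_zero, left_eq_add] at h
    simp [h]
  | tmul a b =>
    induction t using TensorProduct.induction_on with
    | zero => simp
    | tmul p q => simp [sandwich, Algebra.TensorProduct.tmul_mul_tmul, mul_assoc]
    | add x y hx hy => simp only [outerMul_tmul, mul_add, add_mul, map_add] at hx hy ⊢; rw [hx, hy]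
  | add x y hx hy => rw [map_add, map_add, map_add, hx, hy, map_add, map_add, sandwich_add]

theorem mul'_comm_map (H : A →ₐ[k] B) (s : A ⊗[k] A) :
    LinearMap.mul' k B (TensorProduct.comm k B B (Algebra.TensorProduct.map H H s)) =
      H (LinearMap.mul' k A (TensorProduct.comm k A A s)) := by
  induction s using TensorProduct.induction_on with
  | zero => simp
  | tmul a b => simp
  | add x y hx hy => rw [map_add, map_add, map_add, hx, hy, map_add, map_add, map_add]

theorem IsDoubleDerivation.apply_algHom_freeAlgebra {X : Type*} [Fintype X] [DecidableEq X]
    {D : B →ₗ[k] B ⊗[k] B} (hD : IsDoubleDerivation D)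
    {δ : X → (FreeAlgebra k X →ₗ[k] FreeAlgebra k X ⊗[k] FreeAlgebra k X)}
    (hδ : ∀ j, IsDoubleDerivation (δ j))
    (hδι : ∀ j l, δ j (FreeAlgebra.ι k l) = if j = l then (1 : FreeAlgebra k X) ⊗ₜ[k] 1 else 0)
    (H : FreeAlgebra k X →ₐ[k] B) (ψ : FreeAlgebra k X) :
    D (H ψ) =
      ∑ j, outerMul (D (H (FreeAlgebra.ι k j))) (Algebra.TensorProduct.map H H (δ j ψ)) := by
  induction ψ using FreeAlgebra.induction with
  | grade0 r => simp [hD.map_algebraMap, (hδ _).map_algebraMap]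
  | grade1 l =>
    simp only [hδι, apply_ite, map_zero, Finset.sum_ite_eq', Finset.mem_univ, if_true]
    rw [← Algebra.TensorProduct.one_def, map_one, outerMul_one]
  | mul a b ha hb =>
    rw [map_mul, hD, ha, hb, Finset.sum_mul, Finset.mul_sum, ← Finset.sum_add_distrib]
    refine Finset.sum_congr rfl fun j _ => ?_
    rw [hδ j, map_add, map_mul, map_mul, Algebra.TensorProduct.map_tmul,
      Algebra.TensorProduct.map_tmul, map_one, map_add, outerMul_mul_one_tmul,
      outerMul_tmul_one_mul]
  | add a b ha hb => simp only [map_add, ha, hb, ← Finset.sum_add_distrib]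

end DoubleDerivation

/-- (Chain rule for cyclic derivatives in the free algebra.)
Let `F = k⟨x₁,…,xₙ⟩`, let `∂/∂xᵢ` be the double derivations determined by
`∂xⱼ/∂xᵢ = δᵢⱼ 1⊗1` and the Leibniz rule for the outer bimodule structure, and
`D_{xᵢ} = μ∘τ∘(∂/∂xᵢ)` the cyclic derivatives.  For a `k`-algebra endomorphism
`H` of `F` with `H(xⱼ) = hⱼ`, and every `φ ∈ F` and `i`:
`D_{xᵢ}(H(φ)) = Σⱼ (∂hⱼ/∂xᵢ)'' · H(D_{xⱼ}(φ)) · (∂hⱼ/∂xᵢ)'`. -/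
theorem chain_rule_cyclic_derivative
    {k : Type*} [CommRing k] {n : ℕ}
    (δ : Fin n → (FreeAlgebra k (Fin n) →ₗ[k]
      FreeAlgebra k (Fin n) ⊗[k] FreeAlgebra k (Fin n)))
    (hLeib : ∀ i (a b : FreeAlgebra k (Fin n)), δ i (a * b) =
      TensorProduct.map LinearMap.id (LinearMap.mulRight k b) (δ i a) +
      TensorProduct.map (LinearMap.mulLeft k a) LinearMap.id (δ i b))
    (hgen : ∀ i j, δ i (FreeAlgebra.ι k j) =
      if i = j then (1 : FreeAlgebra k (Fin n)) ⊗ₜ[k] 1 else 0)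
    (H : FreeAlgebra k (Fin n) →ₐ[k] FreeAlgebra k (Fin n))
    (φ : FreeAlgebra k (Fin n)) (i : Fin n) :
    LinearMap.mul' k (FreeAlgebra k (Fin n))
        ((TensorProduct.comm k _ _) (δ i (H φ))) =
      ∑ j : Fin n,
        sandwich
          (H (LinearMap.mul' k (FreeAlgebra k (Fin n))
            ((TensorProduct.comm k _ _) (δ j φ))))
          (δ i (H (FreeAlgebra.ι k j))) := by
  have hδ : ∀ j, IsDoubleDerivation (δ j) := fun j a b => by
    rw [hLeib, map_id_mulRight_eq_mul_one_tmul, map_mulLeft_id_eq_tmul_one_mul]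
  rw [(hδ i).apply_algHom_freeAlgebra hδ hgen H φ, map_sum, map_sum]
  simp only [mul'_comm_outerMul, mul'_comm_map]

end
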